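/- arXiv:2402.02595 — 4 statements merged into one kernel-verified Lean document; each statement's English description precedes it below -/
import Mathlib

section
/- If N ⊂ H is a Lagrangian subspace with respect to ω (compatible with U), then U maps M ∩ N onto M⊥ ∩ N⊥ (as subsets of H), where the intersections are taken in the identification M ≅ {(0,x)} and M⊥ ≅ {(y,0)}. In particular dim(M ∩ N) = dim(M⊥ ∩ N⊥). -/
open RealInnerProductSpace

/-- The symplectic form `ω((y,x);(y',x')) = ⟨U x, y'⟩ − ⟨U* y, x'⟩` on `H = M⊥ ⊕ M`. -/
def omegaForm {M Mp : Type*} [NormedAddCommGroup M] [InnerProductSpace ℝ M]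
    [NormedAddCommGroup Mp] [InnerProductSpace ℝ Mp]
    (U : M ≃ₗᵢ[ℝ] Mp) (z z' : Mp × M) : ℝ :=
  ⟪U z.2, z'.1⟫ - ⟪U.symm z.1, z'.2⟫

/-- If `N` is Lagrangian then `U` maps `M ∩ N` onto `M⊥ ∩ N⊥`. -/
theorem U_maps_M_inter_N_onto {M Mp : Type*}
    [NormedAddCommGroup M] [InnerProductSpace ℝ M] [CompleteSpace M]
    [NormedAddCommGroup Mp] [InnerProductSpace ℝ Mp] [CompleteSpace Mp]
    (U : M ≃ₗᵢ[ℝ] Mp) (N : Submodule ℝ (Mp × M))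
    (hNclosed : IsClosed (N : Set (Mp × M)))
    (hLagrangian : ∀ z : Mp × M, z ∈ N ↔ ∀ z' ∈ N, omegaForm U z z' = 0) :
    (fun x : M => ((U x, (0 : M)) : Mp × M)) '' {x : M | ((0 : Mp), x) ∈ N}
      = {z : Mp × M | z.2 = 0 ∧ ∀ w ∈ N, ⟪w.1, z.1⟫ + ⟪w.2, z.2⟫ = (0 : ℝ)} := by
  ext z
  constructor
  · rintro ⟨x, hx, rfl⟩
    refine ⟨rfl, fun w hw => ?_⟩
    have h := (hLagrangian (0, x)).1 hx w hw
    simp only [omegaForm, map_zero, inner_zero_left, sub_zero] at h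
    rw [real_inner_comm] at h
    simp [h]
  · rintro ⟨h2, h⟩
    refine ⟨U.symm z.1, ?_, ?_⟩
    · refine (hLagrangian (0, U.symm z.1)).2 fun w hw => ?_
      have := h w hw
      rw [h2, inner_zero_right, add_zero] at this
      rw [real_inner_comm] at this
      simp [omegaForm, this]
    · exact Prod.ext (U.apply_symm_apply z.1) h2.symm
end

section
/- If N ⊂ H is Lagrangian with respect to ω, then U maps M ∩ N⊥ onto M⊥ ∩ N; in particular dim(M ∩ N⊥) = dim(M⊥ ∩ N). -/
open RealInnerProductSpace

/-- If `N` is Lagrangian then `U` maps `M ∩ N⊥` onto `M⊥ ∩ N`. -/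
theorem U_maps_M_inter_Nperp_onto {M Mp : Type*}
    [NormedAddCommGroup M] [InnerProductSpace ℝ M] [CompleteSpace M]
    [NormedAddCommGroup Mp] [InnerProductSpace ℝ Mp] [CompleteSpace Mp]
    (U : M ≃ₗᵢ[ℝ] Mp) (N : Submodule ℝ (Mp × M))
    (hNclosed : IsClosed (N : Set (Mp × M)))
    (hLagrangian : ∀ z : Mp × M, z ∈ N ↔ ∀ z' ∈ N, omegaForm U z z' = 0) :
    (fun x : M => ((U x, (0 : M)) : Mp × M)) ''
        {x : M | ∀ w ∈ N, ⟪w.1, (0 : Mp)⟫ + ⟪w.2, x⟫ = (0 : ℝ)}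
      = {z : Mp × M | z.2 = 0 ∧ z ∈ N} := by
  ext z
  constructor
  · rintro ⟨x, hx, rfl⟩
    refine ⟨rfl, ?_⟩
    rw [hLagrangian]
    intro z' hz'
    have h := hx z' hz'
    simp only [inner_zero_right, zero_add] at h
    simp only [omegaForm, map_zero, inner_zero_left, U.symm_apply_apply, zero_sub, neg_eq_zero]
    rw [real_inner_comm]; exact h
  · rintro ⟨hz2, hzN⟩
    refine ⟨U.symm z.1, ?_, ?_⟩
    · intro w hw
      have h := (hLagrangian z).mp hzN w hw
      simp [omegaForm, hz2] at h
      simp only [inner_zero_right, zero_add]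
      rw [real_inner_comm]; exact h
    · simp only
      rw [U.apply_symm_apply]
      exact Prod.ext rfl hz2.symm
end

section
/- Let T : M → M be a bounded self-adjoint operator with Lagrangian graph N = {(U T x, x) : x ∈ M}, and λ ∈ ℝ. If T x = λ x for some nonzero x ∈ M, then the vector z = (λ U x, x) ∈ N satisfies M_U(g) z = z for every g in the subgroup N_λ = {![![1 − λt, λ²t],![−t, 1 + λt]] : t ∈ ℝ}; in particular z lies in ∩_{g ∈ N_λ} M_U(g) N, which is hence nonzero. -/
open RealInnerProductSpace

/-- The action `M_U(g)(y, x) = (a y + b U x, c U* y + d x)` for a 2×2 coefficient matrix. -/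
def MUop {M Mp : Type*} [NormedAddCommGroup M] [InnerProductSpace ℝ M]
    [NormedAddCommGroup Mp] [InnerProductSpace ℝ Mp]
    (U : M ≃ₗᵢ[ℝ] Mp) (a b c d : ℝ) (z : Mp × M) : Mp × M :=
  (a • z.1 + b • U z.2, c • U.symm z.1 + d • z.2)

/-- The action of `g ∈ SL(2,ℝ)` on `H = M⊥ ⊕ M`. -/
def MUg {M Mp : Type*} [NormedAddCommGroup M] [InnerProductSpace ℝ M]
    [NormedAddCommGroup Mp] [InnerProductSpace ℝ Mp]
    (U : M ≃ₗᵢ[ℝ] Mp) (g : Matrix.SpecialLinearGroup (Fin 2) ℝ) (z : Mp × M) : Mp × M :=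
  MUop U (g.val 0 0) (g.val 0 1) (g.val 1 0) (g.val 1 1) z

/-- An eigenvector `T x = λ x` produces a vector `z = (λ U x, x)` of the Lagrangian graph `N`
fixed by the subgroup `N_λ`, hence lying in `⋂_{g ∈ N_λ} M_U(g) N`, which is thus nonzero. -/
theorem eigenvector_fixed_by_Nlambda {M Mp : Type*}
    [NormedAddCommGroup M] [InnerProductSpace ℝ M] [CompleteSpace M]
    [NormedAddCommGroup Mp] [InnerProductSpace ℝ Mp] [CompleteSpace Mp]
    (U : M ≃ₗᵢ[ℝ] Mp) (T : M →L[ℝ] M) (hT : IsSelfAdjoint T)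
    (N : Set (Mp × M)) (hN : N = {z : Mp × M | ∃ x : M, z = (U (T x), x)})
    (hLagrangian : ∀ z : Mp × M, z ∈ N ↔ ∀ z' ∈ N, omegaForm U z z' = 0)
    (l : ℝ) (x : M) (hx : x ≠ 0) (hTx : T x = l • x) :
    (∀ t : ℝ,
      MUop U (1 - l * t) (l ^ 2 * t) (-t) (1 + l * t) ((l • U x, x) : Mp × M)
        = ((l • U x, x) : Mp × M)) ∧
    ((l • U x, x) : Mp × M) ∈
      (⋂ t : ℝ, MUop U (1 - l * t) (l ^ 2 * t) (-t) (1 + l * t) '' N) ∧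
    ((l • U x, x) : Mp × M) ≠ 0 := by
  have hfix : ∀ t : ℝ,
      MUop U (1 - l * t) (l ^ 2 * t) (-t) (1 + l * t) ((l • U x, x) : Mp × M)
        = ((l • U x, x) : Mp × M) := by
    intro t
    simp only [MUop, map_smul, LinearIsometryEquiv.symm_apply_apply, Prod.mk.injEq]
    constructor
    · rw [smul_smul, ← add_smul]; ring_nf
    · rw [smul_smul, ← add_smul]; ring_nf
      exact one_smul ℝ x
  refine ⟨hfix, ?_, ?_⟩
  · refine Set.mem_iInter.2 fun t => ⟨(l • U x, x), ?_, hfix t⟩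
    rw [hN]
    exact ⟨x, by rw [hTx, map_smul]⟩
  · intro h
    exact hx (congrArg Prod.snd h)
end

section
/- Let N be a Lagrangian subspace of H with respect to ω, and suppose z ∈ H is such that M_U(g⁻¹) z ∈ N for all g in N₀ = {![![1, 0],![−t, 1]] : t ∈ ℝ}. Writing z = (y, x) ∈ M⊥ ⊕ M, one has ω(M_U(g) z; z) = −t ‖y‖² for g the element of N₀ with parameter t; consequently if additionally z ∈ N then y = 0, i.e., z ∈ M. -/
open RealInnerProductSpace

/-- If all `N₀`-inverse translates of `z` stay in the Lagrangian subspace `N`, then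
`ω(M_U(g_t) z; z) = -t ‖y‖²`; hence if moreover `z ∈ N` then its `M⊥`-component vanishes. -/
theorem continuous_spectrum_condition {M Mp : Type*}
    [NormedAddCommGroup M] [InnerProductSpace ℝ M] [CompleteSpace M]
    [NormedAddCommGroup Mp] [InnerProductSpace ℝ Mp] [CompleteSpace Mp]
    (U : M ≃ₗᵢ[ℝ] Mp) (N : Submodule ℝ (Mp × M))
    (hLagrangian : ∀ w : Mp × M, w ∈ N ↔ ∀ w' ∈ N, omegaForm U w w' = 0)
    (z : Mp × M) (hz : ∀ t : ℝ, MUop U 1 0 t 1 z ∈ N) :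
    (∀ t : ℝ, omegaForm U (MUop U 1 0 (-t) 1 z) z = -t * ‖z.1‖ ^ 2) ∧
    (z ∈ N → z.1 = 0) := by
  have key : ∀ t : ℝ, omegaForm U (MUop U 1 0 (-t) 1 z) z = -t * ‖z.1‖ ^ 2 := by
    intro t
    simp only [omegaForm, MUop, one_smul, zero_smul, add_zero, map_add, map_smul,
      LinearIsometryEquiv.apply_symm_apply, inner_add_left, inner_smul_left, conj_trivial]
    have h1 : ⟪U z.2, z.1⟫ = ⟪U.symm z.1, z.2⟫ := by
      conv_lhs => rw [← U.apply_symm_apply z.1]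
      rw [U.inner_map_map, real_inner_comm]
    rw [h1, real_inner_self_eq_norm_sq]
    ring
  refine ⟨key, fun hzN => ?_⟩
  have h0 : omegaForm U (MUop U 1 0 (-(-1 : ℝ)) 1 z) z = 0 :=
    (hLagrangian _).mp (hz (-(-1))) z hzN
  rw [key] at h0
  have : ‖z.1‖ ^ 2 = 0 := by linarith
  simpa using pow_eq_zero_iff (n := 2) (by norm_num) |>.mp this
end
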